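/- Let G be a graph and T the set of PSD forcing trees induced by some relaxed chronology of PSD forces for a PSD forcing set of size k. Then for every vertex v ∈ V(G), there exists a PSD forcing set B of size k containing v and a relaxed chronology of PSD forces for B whose induced forcing trees are exactly T. -/

import Mathlib

namespace ZF

variable {V : Type*} [Fintype V] [DecidableEq V]

/-- A valid standard zero forcing force within the vertex set `U`, given blue set `B`:
`u` is blue, `v` is its unique white neighbor in `U`. -/
def ZFValid (G : SimpleGraph V) (U B : Set V) (u v : V) : Prop :=
  u ∈ U ∧ v ∈ U ∧ u ∈ B ∧ v ∉ B ∧ G.Adj u v ∧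
    ∀ w ∈ U, G.Adj u w → w ∉ B → w = v

/-- `whiteConn G U B a b` : `a` and `b` are joined by a walk through white
(non-blue) vertices of `U` (possibly trivial). -/
def whiteConn (G : SimpleGraph V) (U B : Set V) : V → V → Prop :=
  Relation.ReflTransGen (fun a b => G.Adj a b ∧ a ∈ U ∧ b ∈ U ∧ a ∉ B ∧ b ∉ B)

/-- A valid PSD force within the vertex set `U`, given blue set `B`:
`u` is blue and `v` is the unique neighbor of `u` in the component of the
white subgraph containing `v`. -/
def PSDValid (G : SimpleGraph V) (U B : Set V) (u v : V) : Prop :=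
  u ∈ U ∧ v ∈ U ∧ u ∈ B ∧ v ∉ B ∧ G.Adj u v ∧
    ∀ w ∈ U, G.Adj u w → w ∉ B → whiteConn G U B v w → w = v

/-- One propagation step for a generic color change rule `valid`. -/
def step (valid : Set V → V → V → Prop) (B : Set V) : Set V :=
  B ∪ {v | ∃ u, valid B u v}

/-- Iterated propagation. -/
def iter (valid : Set V → V → V → Prop) (B : Set V) : ℕ → Set V :=
  fun k => (step valid)^[k] B

/-- `B ⊆ U` is a forcing set of the induced subgraph on `U` for the rule `valid`. -/
def IsForcingSet (valid : Set V → V → V → Prop) (U B : Set V) : Prop :=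
  B ⊆ U ∧ ∃ k, U ⊆ iter valid B k

/-- Propagation time of the set `B` for rule `valid` on the induced subgraph on `U`. -/
noncomputable def propTime (valid : Set V → V → V → Prop) (U B : Set V) : ℕ :=
  sInf {k | U ⊆ iter valid B k}

/-- Vertices blue after `k` time-steps of the family of forces `F`, starting from `B`. -/
def expand (B : Set V) (F : ℕ → Set (V × V)) : ℕ → Set V
  | 0 => B
  | k + 1 => expand B F k ∪ {v | ∃ u, (u, v) ∈ F (k + 1)}

/-- A relaxed chronology of forces (for the rule `valid`) for the forcing set `B`
on the induced subgraph on `U`, with completion time `K`: at each time-step an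
arbitrary subset of the currently valid forces is performed (no vertex being
forced twice in one step), and all of `U` is blue after step `K`. -/
structure RelaxedChron (valid : Set V → V → V → Prop) (U B : Set V)
    (K : ℕ) (F : ℕ → Set (V × V)) : Prop where
  subset : B ⊆ U
  init : F 0 = ∅
  bound : ∀ k, K < k → F k = ∅
  forcesValid : ∀ k < K, ∀ u v, (u, v) ∈ F (k + 1) → valid (expand B F k) u v
  uniqueForcer : ∀ k u₁ u₂ v, (u₁, v) ∈ F k → (u₂, v) ∈ F k → u₁ = u₂
  complete : U ⊆ expand B F K

/-- The underlying set of forces of a relaxed chronology. -/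
def forcesOf (F : ℕ → Set (V × V)) (K : ℕ) : Set (V × V) :=
  {p | ∃ k, 1 ≤ k ∧ k ≤ K ∧ p ∈ F k}

/-- The terminus of a relaxed chronology: the vertices (of `U`) performing no force. -/
def terminus (U : Set V) (F : ℕ → Set (V × V)) (K : ℕ) : Set V :=
  {v ∈ U | ∀ u, (v, u) ∉ forcesOf F K}

/-- The reversal of a relaxed chronology: each force is reversed and
the order of the time-steps is reversed. -/
def revChron (F : ℕ → Set (V × V)) (K : ℕ) : ℕ → Set (V × V) :=
  fun k => if 1 ≤ k ∧ k ≤ K then {p | (p.2, p.1) ∈ F (K - k + 1)} else ∅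

/-- One round of performing all currently valid forces from the set of forces `S`. -/
def forceStep (valid : Set V → V → V → Prop) (S : Set (V × V)) (B : Set V) : Set V :=
  B ∪ {v | ∃ u, (u, v) ∈ S ∧ valid B u v}

def forceIter (valid : Set V → V → V → Prop) (S : Set (V × V)) (B : Set V) : ℕ → Set V :=
  fun t => (forceStep valid S)^[t] B

/-- Propagation time of a set of forces `S` for starting set `B` on `U`. -/
noncomputable def ptForces (valid : Set V → V → V → Prop) (U : Set V)
    (S : Set (V × V)) (B : Set V) : ℕ :=
  sInf {t | U ⊆ forceIter valid S B t}

/-- `v` is active at time-step `k` of the relaxed chronology `F`: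
it is blue after step `k` and has not yet performed a force. -/
def activeAt (B : Set V) (F : ℕ → Set (V × V)) (v : V) (k : ℕ) : Prop :=
  v ∈ expand B F k ∧ ∀ j ≤ k, ∀ u, (v, u) ∉ F j

/-- The zero forcing number. -/
noncomputable def Z (G : SimpleGraph V) : ℕ :=
  sInf {n | ∃ B : Set V, B.ncard = n ∧ IsForcingSet (ZFValid G Set.univ) Set.univ B}

/-- The PSD forcing number. -/
noncomputable def Zplus (G : SimpleGraph V) : ℕ :=
  sInf {n | ∃ B : Set V, B.ncard = n ∧ IsForcingSet (PSDValid G Set.univ) Set.univ B}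

/-- Standard `m`-propagation time `pt(G,m)`. -/
noncomputable def ptm (G : SimpleGraph V) (m : ℕ) : ℕ :=
  sInf {t | ∃ B : Set V, B.ncard = m ∧ IsForcingSet (ZFValid G Set.univ) Set.univ B ∧
    propTime (ZFValid G Set.univ) Set.univ B = t}

/-- PSD `m`-propagation time `pt₊(G,m)`. -/
noncomputable def ptplusm (G : SimpleGraph V) (m : ℕ) : ℕ :=
  sInf {t | ∃ B : Set V, B.ncard = m ∧ IsForcingSet (PSDValid G Set.univ) Set.univ B ∧
    propTime (PSDValid G Set.univ) Set.univ B = t}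

/-- Standard propagation time `pt(G)`. -/
noncomputable def pt (G : SimpleGraph V) : ℕ := ptm G (Z G)

/-- PSD propagation time `pt₊(G)`. -/
noncomputable def ptplus (G : SimpleGraph V) : ℕ := ptplusm G (Zplus G)

/-- PSD throttling number `thr₊(G)`. -/
noncomputable def thrplus (G : SimpleGraph V) : ℕ :=
  sInf {t | ∃ B : Set V, IsForcingSet (PSDValid G Set.univ) Set.univ B ∧
    t = B.ncard + propTime (PSDValid G Set.univ) Set.univ B}

/-- Closed neighborhood of a set. -/
def closedNbhd (G : SimpleGraph V) (B : Set V) : Set V :=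
  B ∪ {v | ∃ u ∈ B, G.Adj u v}

/-- Power domination process: the first step colors the closed neighborhood,
subsequent steps apply the standard zero forcing rule. -/
def pdIter (G : SimpleGraph V) (B : Set V) : ℕ → Set V
  | 0 => B
  | 1 => closedNbhd G B
  | (k + 2) => step (ZFValid G Set.univ) (pdIter G B (k + 1))

/-- `B` is a power dominating set. -/
def IsPDSet (G : SimpleGraph V) (B : Set V) : Prop :=
  ∃ k, Set.univ ⊆ pdIter G B k

/-- Power propagation time of a set. -/
noncomputable def pdPropTime (G : SimpleGraph V) (B : Set V) : ℕ :=
  sInf {k | Set.univ ⊆ pdIter G B k}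

/-- Power `m`-propagation time `ppt(G,m)`. -/
noncomputable def pptm (G : SimpleGraph V) (m : ℕ) : ℕ :=
  sInf {t | ∃ B : Set V, B.ncard = m ∧ IsPDSet G B ∧ pdPropTime G B = t}

/-- Restriction of a family of forces to those with both endpoints in `W`. -/
def restrictF (F : ℕ → Set (V × V)) (W : Set V) : ℕ → Set (V × V) :=
  fun k => {p ∈ F k | p.1 ∈ W ∧ p.2 ∈ W}

/-- The forcing tree of `b` : all vertices reachable from `b` by a chain of forces in `S`. -/
def treeOf (S : Set (V × V)) (b : V) : Set V :=
  {w | Relation.ReflTransGen (fun a c => (a, c) ∈ S) b w}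

open Classical in
/-- The endpoint, after `k` steps, of the path grown from `b ∈ B` in the
path bundle of the relaxed chronology `F` induced by the vertex `x`: the path is
extended by a force from its current endpoint into the component of white
vertices containing `x`, whenever such a force occurs. -/
noncomputable def lastVert (G : SimpleGraph V) (B : Set V) (F : ℕ → Set (V × V))
    (x : V) (b : V) : ℕ → V
  | 0 => b
  | k + 1 =>
    if h : ∃ w, (lastVert G B F x b k, w) ∈ F (k + 1) ∧ x ∉ expand B F k ∧
        whiteConn G Set.univ (expand B F k) x w
    then h.choose else lastVert G B F x b k

/-- The vertex set of the path bundle of `F` induced by `x`. -/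
def bundle (G : SimpleGraph V) (B : Set V) (F : ℕ → Set (V × V)) (x : V) (K : ℕ) : Set V :=
  {v | ∃ b ∈ B, ∃ j ≤ K, lastVert G B F x b j = v}

/-- The path of the bundle grown from `b`, as a list of vertices. -/
noncomputable def bundlePath (G : SimpleGraph V) (B : Set V) (F : ℕ → Set (V × V))
    (x : V) (K : ℕ) (b : V) : List V :=
  ((List.range (K + 1)).map (lastVert G B F x b)).dedup

/-- A nonempty path in `G`, given as a list of distinct consecutively adjacent vertices. -/
def IsPathList (G : SimpleGraph V) (l : List V) : Prop :=
  l ≠ [] ∧ l.Nodup ∧ l.Chain' G.Adj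

/-- `P` is an `(α,β)`-linkage: a collection of pairwise vertex-disjoint paths,
`α` consisting of one endpoint of each path and `β` of the other endpoints. -/
def IsLinkage (G : SimpleGraph V) (α β : Set V) (P : Set (List V)) : Prop :=
  (∀ l ∈ P, IsPathList G l) ∧
  (∀ l ∈ P, ∀ l' ∈ P, l ≠ l' → ∀ v, v ∈ l → v ∉ l') ∧
  (∀ l ∈ P, ∀ l' ∈ P, l.head? = l'.head? → l = l') ∧
  (∀ l ∈ P, ∀ l' ∈ P, l.getLast? = l'.getLast? → l = l') ∧
  α = {v | ∃ l ∈ P, l.head? = some v} ∧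
  β = {v | ∃ l ∈ P, l.getLast? = some v}

/-- `P` is a rigid linkage: for some `α`, `β` it is the unique `(α,β)`-linkage in `G`. -/
def IsRigidLinkage (G : SimpleGraph V) (P : Set (List V)) : Prop :=
  ∃ α β, IsLinkage G α β P ∧ ∀ P', IsLinkage G α β P' → P' = P

/-- A path cover of `G` : `m` vertex-disjoint induced paths covering all vertices,
the `i`-th path having vertices `vtx i 0, …, vtx i (n i − 1)` in path order. -/
structure IsPathCover (G : SimpleGraph V) (m : ℕ) (n : Fin m → ℕ)
    (vtx : (i : Fin m) → Fin (n i) → V) : Prop where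
  pos : ∀ i, 0 < n i
  inj : Function.Injective (fun p : (i : Fin m) × Fin (n i) => vtx p.1 p.2)
  cover : ∀ v : V, ∃ i j, vtx i j = v
  induced : ∀ i (j j' : Fin (n i)),
    G.Adj (vtx i j) (vtx i j') ↔ ((j : ℕ) + 1 = (j' : ℕ) ∨ (j' : ℕ) + 1 = (j : ℕ))

/-- A witness that a path cover is a parallel increasing path cover: a collection of
block partitions of `{0,…,K}`, one per path, compatible with the edges of `G`. -/
structure IsPIPWitness (G : SimpleGraph V) (m : ℕ) (n : Fin m → ℕ)
    (vtx : (i : Fin m) → Fin (n i) → V) (K : ℕ)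
    (A : (i : Fin m) → Fin (n i) → Finset ℕ) : Prop where
  mem : ∀ i j, A i j ⊆ Finset.range (K + 1)
  nonempty : ∀ i j, (A i j).Nonempty
  partition : ∀ i, ∀ x ∈ Finset.range (K + 1), ∃! j, x ∈ A i j
  mono : ∀ i (j j' : Fin (n i)), (j : ℕ) < (j' : ℕ) → ∀ x ∈ A i j, ∀ y ∈ A i j', x < y
  edge : ∀ (i i' : Fin m) j j', i ≠ i' →
    G.Adj (vtx i j) (vtx i' j') → ((A i j) ∩ (A i' j')).Nonempty

/-- A parallel increasing path cover of `G`. -/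
def IsPIP (G : SimpleGraph V) (m : ℕ) (n : Fin m → ℕ)
    (vtx : (i : Fin m) → Fin (n i) → V) : Prop :=
  IsPathCover G m n vtx ∧ ∃ K A, IsPIPWitness G m n vtx K A

/-- The path cover given by `vtx` is the chain set of the family of forces `F` :
the underlying forces are exactly the consecutive pairs along the paths. -/
def IsChainSetOf (m : ℕ) (n : Fin m → ℕ) (vtx : (i : Fin m) → Fin (n i) → V)
    (F : ℕ → Set (V × V)) (K : ℕ) : Prop :=
  ∀ u w, (u, w) ∈ forcesOf F K ↔
    ∃ (i : Fin m) (j : Fin (n i)) (j' : Fin (n i)),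
      u = vtx i j ∧ w = vtx i j' ∧ (j : ℕ) + 1 = (j' : ℕ)

end ZF

/-!
The forces of the chronology that enter the white component of `v` at the moment they are performed
form a path bundle: vertex-disjoint paths starting in `B₀`, with `v` at the end of one of them.
Undoing these forces, latest first, and then replaying all the other forces in their original order
is again a relaxed chronology of PSD forces, now starting from `B₀` with the start of every path
exchanged for its end. Its forcing trees are the old ones, each tree containing a path being
re-rooted at the end of that path; so the number of roots is unchanged, and `v` is now a root.
-/

namespace ZF

section WhiteConn

variable {V : Type*} {G : SimpleGraph V} {U B B' : Set V} {a b u w : V}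

theorem whiteConn.mono (hBB' : B ⊆ B') (h : whiteConn G U B' a b) : whiteConn G U B a b :=
  Relation.ReflTransGen.mono (fun _ _ ⟨hadj, hxU, hyU, hx, hy⟩ =>
    ⟨hadj, hxU, hyU, fun hx' => hx (hBB' hx'), fun hy' => hy (hBB' hy')⟩) _ _ h

theorem whiteConn.symm (h : whiteConn G U B a b) : whiteConn G U B b a := by
  induction h with
  | refl => exact Relation.ReflTransGen.refl
  | tail _ hcd ih =>
    obtain ⟨hadj, hcU, hdU, hc, hd⟩ := hcd
    exact Relation.ReflTransGen.head ⟨hadj.symm, hdU, hcU, hd, hc⟩ ih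

theorem whiteConn.eq_of_mem (h : whiteConn G U B a b) (ha : a ∈ B) : a = b := by
  rcases Relation.ReflTransGen.cases_head h with hab | ⟨_, hac, -⟩
  · exact hab
  · exact absurd ha hac.2.2.2.1

theorem PSDValid.mono (h : PSDValid G U B u w) (hBB' : B ⊆ B') (hw : w ∉ B') :
    PSDValid G U B' u w := by
  obtain ⟨hu, hwU, huB, -, hadj, hcomp⟩ := h
  exact ⟨hu, hwU, hBB' huB, hw, hadj, fun y hy hadj' hyB' hconn =>
    hcomp y hy hadj' (fun hyB => hyB' (hBB' hyB)) (hconn.mono hBB')⟩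

end WhiteConn

section Expand

variable {V : Type*} {B : Set V} {F : ℕ → Set (V × V)} {K k : ℕ} {x : V}

theorem mem_expand_iff :
    x ∈ expand B F k ↔ x ∈ B ∨ ∃ j < k, ∃ u, (u, x) ∈ F (j + 1) := by
  induction k with
  | zero => simp [expand]
  | succ k ih =>
    simp only [expand, Set.mem_union, ih, Set.mem_ofPred_eq, Nat.lt_succ_iff_lt_or_eq]
    grind

theorem expand_mono : Monotone (expand B F) :=
  monotone_nat_of_le_succ fun _ => Set.subset_union_left

theorem subset_expand : B ⊆ expand B F k :=
  expand_mono (Nat.zero_le k)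

theorem mem_expand_succ {u : V} (h : (u, x) ∈ F (k + 1)) : x ∈ expand B F (k + 1) :=
  Or.inr ⟨u, h⟩

theorem mem_forcesOf_iff {p : V × V} : p ∈ forcesOf F K ↔ ∃ j < K, p ∈ F (j + 1) := by
  constructor
  · rintro ⟨k, hk, hkK, hp⟩
    exact ⟨k - 1, by omega, by rwa [Nat.sub_add_cancel hk]⟩
  · rintro ⟨j, hj, hp⟩
    exact ⟨j + 1, by omega, hj, hp⟩

end Expand

namespace RelaxedChron

variable {V : Type*} {valid : Set V → V → V → Prop} {U B : Set V} {K j k : ℕ}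
  {F : ℕ → Set (V × V)} {u u' w : V}

theorem lt_of_mem (hC : RelaxedChron valid U B K F) (h : (u, w) ∈ F (k + 1)) : k < K := by
  by_contra hk
  rw [hC.bound (k + 1) (by omega)] at h
  exact h

theorem valid_of_mem (hC : RelaxedChron valid U B K F) (h : (u, w) ∈ F (k + 1)) :
    valid (expand B F k) u w :=
  hC.forcesValid k (hC.lt_of_mem h) u w h

theorem isForcingSet
    (hmono : ∀ ⦃C C' u w⦄, valid C u w → C ⊆ C' → w ∉ C' → valid C' u w)
    (hC : RelaxedChron valid U B K F) : IsForcingSet valid U B := by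
  have expand_subset_iter : ∀ m, expand B F m ⊆ iter valid B m := by
    intro m
    induction m with
    | zero => exact subset_rfl
    | succ m ih =>
      simp only [iter, Function.iterate_succ_apply']
      rintro x (hx | ⟨u, hu⟩)
      · exact Or.inl (ih hx)
      · by_cases hx : x ∈ iter valid B m
        · exact Or.inl hx
        · exact Or.inr ⟨u, hmono (hC.valid_of_mem hu) ih hx⟩
  exact ⟨hC.subset, K, hC.complete.trans (expand_subset_iter K)⟩

variable {G : SimpleGraph V}

theorem forcer_mem_expand (hC : RelaxedChron (PSDValid G Set.univ) Set.univ B K F)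
    (h : (u, w) ∈ F (k + 1)) : u ∈ expand B F k :=
  (hC.valid_of_mem h).2.2.1

theorem target_not_mem_expand (hC : RelaxedChron (PSDValid G Set.univ) Set.univ B K F)
    (h : (u, w) ∈ F (k + 1)) : w ∉ expand B F k :=
  (hC.valid_of_mem h).2.2.2.1

theorem target_not_mem (hC : RelaxedChron (PSDValid G Set.univ) Set.univ B K F)
    (h : (u, w) ∈ F (k + 1)) : w ∉ B :=
  fun hw => hC.target_not_mem_expand h (subset_expand hw)

theorem adj (hC : RelaxedChron (PSDValid G Set.univ) Set.univ B K F)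
    (h : (u, w) ∈ F (k + 1)) : G.Adj u w :=
  (hC.valid_of_mem h).2.2.2.2.1

theorem forced_once (hC : RelaxedChron (PSDValid G Set.univ) Set.univ B K F)
    (h : (u, w) ∈ F (j + 1)) (h' : (u', w) ∈ F (k + 1)) : j = k ∧ u = u' := by
  have not_before : ∀ {j k u u'}, (u, w) ∈ F (j + 1) → (u', w) ∈ F (k + 1) → ¬ j < k :=
    fun h h' hjk => hC.target_not_mem_expand h' (expand_mono hjk (mem_expand_succ h))
  obtain rfl : j = k := by
    have := not_before h h'
    have := not_before h' h
    omega
  exact ⟨rfl, hC.uniqueForcer _ _ _ _ h h'⟩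

end RelaxedChron

section Reroot

variable {V : Type*} {S S' P : Set (V × V)} {B : Set V} {b e z : V}

structure IsGradedForest (S : Set (V × V)) (B : Set V) : Prop where
  target_not_mem : ∀ ⦃a c⦄, (a, c) ∈ S → c ∉ B
  in_unique : ∀ ⦃a a' c⦄, (a, c) ∈ S → (a', c) ∈ S → a = a'
  graded : ∃ t : V → ℕ, ∀ ⦃a c⦄, (a, c) ∈ S → t a < t c

structure IsPathBundle (S P : Set (V × V)) (B : Set V) : Prop where
  subset : P ⊆ S
  out_unique : ∀ ⦃a c c'⦄, (a, c) ∈ P → (a, c') ∈ P → c = c'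
  source_mem : Prod.fst '' P ⊆ B ∪ Prod.snd '' P

def reroot (S P : Set (V × V)) : Set (V × V) :=
  Prod.swap ⁻¹' P ∪ S \ P

def rerootRoots (B : Set V) (P : Set (V × V)) : Set V :=
  (B ∪ Prod.snd '' P) \ Prod.fst '' P

theorem treeOf_mono (h : S ⊆ S') : treeOf S b ⊆ treeOf S' b :=
  fun _ hz => Relation.ReflTransGen.mono (fun _ _ hp => h hp) _ _ hz

theorem mem_treeOf_reroot_of_mem (h : e ∈ treeOf P z) : z ∈ treeOf (reroot S P) e :=
  Relation.ReflTransGen.mono (fun _ _ hp => Or.inl hp) _ _ (Relation.reflTransGen_swap.mpr h)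

theorem IsGradedForest.root_unique (hF : IsGradedForest S B) {b' : V} (hb : b ∈ B)
    (hb' : b' ∈ B) (hz : z ∈ treeOf S b) (hz' : z ∈ treeOf S b') : b = b' := by
  induction hz with
  | refl =>
    rcases Relation.ReflTransGen.cases_tail hz' with rfl | ⟨_, -, hqb⟩
    · rfl
    · exact absurd hb (hF.target_not_mem hqb)
  | tail _ hpz ih =>
    rcases Relation.ReflTransGen.cases_tail hz' with rfl | ⟨_, hbq, hqz⟩
    · exact absurd hb' (hF.target_not_mem hpz)
    · exact ih (hF.in_unique hqz hpz ▸ hbq)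

theorem IsGradedForest.exists_root (hF : IsGradedForest S B) (hP : IsPathBundle S P B) {x : V}
    (hx : x ∈ B ∪ Prod.snd '' P) : ∃ b ∈ B, x ∈ treeOf P b := by
  obtain ⟨t, ht⟩ := hF.graded
  induction hn : t x using Nat.strong_induction_on generalizing x with
  | _ n ih =>
    rcases hx with hxB | ⟨⟨a, x⟩, hax, rfl⟩
    · exact ⟨x, hxB, Relation.ReflTransGen.refl⟩
    · obtain ⟨b, hb, hab⟩ :=
        ih (t a) (hn ▸ ht (hP.subset hax)) (hP.source_mem ⟨_, hax, rfl⟩) rfl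
      exact ⟨b, hb, Relation.ReflTransGen.tail hab hax⟩

theorem IsGradedForest.exists_end [Finite V] (hF : IsGradedForest S B) (hP : IsPathBundle S P B)
    (a : V) : ∃ e ∈ treeOf P a, e ∉ Prod.fst '' P := by
  obtain ⟨t, ht⟩ := hF.graded
  obtain ⟨e, hae, hmax⟩ :=
    Set.exists_max_image (treeOf P a) t (Set.toFinite _) ⟨a, Relation.ReflTransGen.refl⟩
  refine ⟨e, hae, ?_⟩
  rintro ⟨⟨_, c⟩, hec, rfl⟩
  exact (hmax c (Relation.ReflTransGen.tail hae hec)).not_gt (ht (hP.subset hec))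

theorem IsPathBundle.mem_treeOf_of_not_mem (hP : IsPathBundle S P B) (hz : z ∈ treeOf P b)
    (he : e ∈ treeOf P b) (he' : e ∉ Prod.fst '' P) : e ∈ treeOf P z := by
  rcases Relation.ReflTransGen.total_of_right_unique hP.out_unique hz he with h | h
  · exact h
  · rcases Relation.ReflTransGen.cases_head h with rfl | ⟨c, hec, -⟩
    · exact Relation.ReflTransGen.refl
    · exact absurd ⟨_, hec, rfl⟩ he'

theorem IsGradedForest.mem_treeOf_of_mem_bundle (hF : IsGradedForest S B)
    (hP : IsPathBundle S P B) {p : V} (hb : b ∈ B) (hpz : (p, z) ∈ P) (hz : z ∈ treeOf S b) :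
    z ∈ treeOf P b := by
  obtain ⟨b', hb', hp⟩ := hF.exists_root hP (hP.source_mem ⟨_, hpz, rfl⟩)
  obtain rfl : b' = b :=
    hF.root_unique hb' hb (Relation.ReflTransGen.tail (treeOf_mono hP.subset hp) (hP.subset hpz)) hz
  exact Relation.ReflTransGen.tail hp hpz

theorem IsGradedForest.treeOf_reroot (hF : IsGradedForest S B) (hP : IsPathBundle S P B)
    (hb : b ∈ B) (hbe : e ∈ treeOf P b) (he : e ∉ Prod.fst '' P) :
    treeOf (reroot S P) e = treeOf S b := by
  ext z
  constructor
  · intro hz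
    induction hz with
    | refl => exact treeOf_mono hP.subset hbe
    | @tail p z _ hpz ih =>
      rcases hpz with hzp | ⟨hpz, -⟩
      · replace hzp : (z, p) ∈ S := hP.subset hzp
        rcases Relation.ReflTransGen.cases_tail ih with rfl | ⟨q, hbq, hqp⟩
        · exact absurd hb (hF.target_not_mem hzp)
        · rwa [hF.in_unique hzp hqp]
      · exact Relation.ReflTransGen.tail ih hpz
  · intro hz
    induction hz with
    | refl => exact mem_treeOf_reroot_of_mem hbe
    | @tail p z hbp hpz ih =>
      by_cases hpzP : (p, z) ∈ P
      · exact mem_treeOf_reroot_of_mem <| hP.mem_treeOf_of_not_mem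
          (hF.mem_treeOf_of_mem_bundle hP hb hpzP (Relation.ReflTransGen.tail hbp hpz)) hbe he
      · exact Relation.ReflTransGen.tail ih (Or.inr ⟨hpz, hpzP⟩)

theorem IsGradedForest.image_treeOf_reroot [Finite V] (hF : IsGradedForest S B)
    (hP : IsPathBundle S P B) : treeOf (reroot S P) '' rerootRoots B P = treeOf S '' B := by
  ext X
  constructor
  · rintro ⟨e, ⟨he, he'⟩, rfl⟩
    obtain ⟨b, hb, hbe⟩ := hF.exists_root hP he
    exact ⟨b, hb, (hF.treeOf_reroot hP hb hbe he').symm⟩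
  · rintro ⟨b, hb, rfl⟩
    obtain ⟨e, hbe, he⟩ := hF.exists_end hP b
    have he_mem : e ∈ B ∪ Prod.snd '' P := by
      rcases Relation.ReflTransGen.cases_tail hbe with rfl | ⟨_, -, hqe⟩
      · exact Or.inl hb
      · exact Or.inr ⟨_, hqe, rfl⟩
    exact ⟨e, ⟨he_mem, he⟩, hF.treeOf_reroot hP hb hbe he⟩

theorem IsGradedForest.ncard_rerootRoots [Finite V] (hF : IsGradedForest S B)
    (hP : IsPathBundle S P B) : (rerootRoots B P).ncard = B.ncard := by
  have hsnd : (Prod.snd '' P).ncard = P.ncard :=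
    Set.InjOn.ncard_image fun ⟨_, _⟩ hp ⟨_, _⟩ hq (h : _ = _) => by
      subst h
      rw [hF.in_unique (hP.subset hp) (hP.subset hq)]
  have hfst : (Prod.fst '' P).ncard = P.ncard :=
    Set.InjOn.ncard_image fun ⟨_, _⟩ hp ⟨_, _⟩ hq (h : _ = _) => by
      subst h
      rw [hP.out_unique hp hq]
  have hdisj : Disjoint B (Prod.snd '' P) :=
    Set.disjoint_right.mpr fun _ ⟨_, hp, hc⟩ => hc ▸ hF.target_not_mem (hP.subset hp)
  rw [rerootRoots, Set.ncard_sdiff hP.source_mem, Set.ncard_union_eq hdisj, hsnd, hfst]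
  omega

end Reroot

section Bundle

variable {V : Type*} {G : SimpleGraph V} {B : Set V} {K j k s : ℕ} {F : ℕ → Set (V × V)}
  {a c u w w' x y : V}

/-- The edges of the path bundle of `F` induced by `x`. -/
def IsBundleForce (G : SimpleGraph V) (B : Set V) (F : ℕ → Set (V × V)) (x : V) (k : ℕ)
    (u w : V) : Prop :=
  (u, w) ∈ F (k + 1) ∧ whiteConn G Set.univ (expand B F k) x w

def bundleForces (G : SimpleGraph V) (B : Set V) (F : ℕ → Set (V × V)) (x : V) (n : ℕ) :
    Set (V × V) :=
  {p | ∃ k < n, IsBundleForce G B F x k p.1 p.2}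

/-- Steps `1, …, K` undo the bundle forces, latest first; steps `K + 1, …, 2K` replay the other
forces in their original order. -/
def tradeChron (G : SimpleGraph V) (B : Set V) (F : ℕ → Set (V × V)) (x : V) (K : ℕ) :
    ℕ → Set (V × V) := fun m =>
  if m ≤ K then {p | IsBundleForce G B F x (K - m) p.2 p.1}
  else {p ∈ F (m - K) | ¬ IsBundleForce G B F x (m - K - 1) p.1 p.2}

/-- The blue set of `tradeChron` once the bundle forces of the steps after `n` are undone. -/
def tradeBlue (G : SimpleGraph V) (B : Set V) (F : ℕ → Set (V × V)) (x : V) (K n : ℕ) :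
    Set V :=
  (B ∪ Prod.snd '' bundleForces G B F x K) \ Prod.fst '' bundleForces G B F x n

theorem tradeChron_of_le {m : ℕ} (hm : m ≤ K) :
    tradeChron G B F x K m = {p | IsBundleForce G B F x (K - m) p.2 p.1} :=
  if_pos hm

theorem tradeChron_add_succ (j : ℕ) : tradeChron G B F x K (K + j + 1) =
    {p ∈ F (j + 1) | ¬ IsBundleForce G B F x j p.1 p.2} := by
  rw [tradeChron, if_neg (by omega), show K + j + 1 - K = j + 1 by omega, Nat.add_sub_cancel]

namespace RelaxedChron

variable (hC : RelaxedChron (PSDValid G Set.univ) Set.univ B K F)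
include hC

theorem isGradedForest : IsGradedForest (forcesOf F K) B where
  target_not_mem _ _ h := by
    obtain ⟨j, -, h⟩ := mem_forcesOf_iff.mp h
    exact hC.target_not_mem h
  in_unique _ _ _ h h' := by
    obtain ⟨j, -, h⟩ := mem_forcesOf_iff.mp h
    obtain ⟨k, -, h'⟩ := mem_forcesOf_iff.mp h'
    exact (hC.forced_once h h').2
  graded := by
    refine ⟨fun y => sInf {k | y ∈ expand B F k}, fun a c h => ?_⟩
    obtain ⟨j, -, h⟩ := mem_forcesOf_iff.mp h
    have hc : sInf {k | c ∈ expand B F k} ∈ {k | c ∈ expand B F k} :=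
      Nat.sInf_mem ⟨j + 1, mem_expand_succ h⟩
    have hjc : j < sInf {k | c ∈ expand B F k} :=
      lt_of_not_ge fun hle => hC.target_not_mem_expand h (expand_mono hle hc)
    exact (Nat.sInf_le (hC.forcer_mem_expand h)).trans_lt hjc

theorem bundleForce_out_unique (h : IsBundleForce G B F x j u w)
    (h' : IsBundleForce G B F x k u w') : j = k ∧ w = w' := by
  have of_le : ∀ {j k w w'}, IsBundleForce G B F x j u w → IsBundleForce G B F x k u w' →
      j ≤ k → w' = w := fun h h' hjk =>
    (hC.valid_of_mem h.1).2.2.2.2.2 _ trivial (hC.adj h'.1)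
      (fun hw' => hC.target_not_mem_expand h'.1 (expand_mono hjk hw'))
      (Relation.ReflTransGen.trans h.2.symm (h'.2.mono (expand_mono hjk)))
  obtain rfl : w = w' := (le_total j k).elim (fun hjk => (of_le h h' hjk).symm) (of_le h' h)
  exact ⟨(hC.forced_once h.1 h'.1).1, rfl⟩

theorem exists_bundleForce_into_forcer (h : IsBundleForce G B F x k u w) (hu : u ∉ B) :
    ∃ j < k, ∃ u', IsBundleForce G B F x j u' u := by
  obtain hu' | ⟨j, hjk, u', hj⟩ := mem_expand_iff.mp (hC.forcer_mem_expand h.1)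
  · exact absurd hu' hu
  have hE : expand B F j ⊆ expand B F k := expand_mono hjk.le
  refine ⟨j, hjk, u', hj, Relation.ReflTransGen.tail (h.2.mono hE)
    ⟨(hC.adj h.1).symm, trivial, trivial, fun hw => ?_, hC.target_not_mem_expand hj⟩⟩
  exact hC.target_not_mem_expand h.1 (hE hw)

theorem isPathBundle : IsPathBundle (forcesOf F K) (bundleForces G B F x K) B where
  subset _ := fun ⟨k, hk, h⟩ => mem_forcesOf_iff.mpr ⟨k, hk, h.1⟩
  out_unique _ _ _ := fun ⟨_, _, h⟩ ⟨_, _, h'⟩ => (hC.bundleForce_out_unique h h').2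
  source_mem := by
    rintro _ ⟨⟨u, w⟩, ⟨k, hk, h⟩, rfl⟩
    by_cases hu : u ∈ B
    · exact Or.inl hu
    · obtain ⟨j, hjk, u', h'⟩ := hC.exists_bundleForce_into_forcer h hu
      exact Or.inr ⟨(u', u), ⟨j, by omega, h'⟩, rfl⟩

theorem mem_rerootRoots_bundleForces : x ∈ rerootRoots B (bundleForces G B F x K) := by
  refine ⟨?_, ?_⟩
  · rcases mem_expand_iff.mp (hC.complete (Set.mem_univ x)) with hx | ⟨j, hj, u, hu⟩
    · exact Or.inl hx
    · exact Or.inr ⟨(u, x), ⟨j, hj, hu, Relation.ReflTransGen.refl⟩, rfl⟩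
  · rintro ⟨⟨_, w⟩, ⟨j, -, h⟩, rfl⟩
    have hxw := h.2.eq_of_mem (hC.forcer_mem_expand h.1)
    exact hC.target_not_mem_expand h.1 (hxw ▸ hC.forcer_mem_expand h.1)

theorem isBundleForce_of_adj (hc : c ∈ expand B F s) (hcN : c ∉ tradeBlue G B F x K (s + 1))
    (ha : a ∉ expand B F s) (hxa : whiteConn G Set.univ (expand B F s) x a) (hca : G.Adj c a) :
    IsBundleForce G B F x s c a := by
  by_cases hcB : c ∈ B ∪ Prod.snd '' bundleForces G B F x K
  · obtain ⟨⟨_, w⟩, ⟨j, hj, h⟩, rfl⟩ := not_not.mp fun hc' => hcN ⟨hcB, hc'⟩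
    have hE : expand B F j ⊆ expand B F s := expand_mono (by omega)
    obtain rfl : a = w := (hC.valid_of_mem h.1).2.2.2.2.2 a trivial hca (fun ha' => ha (hE ha'))
      (Relation.ReflTransGen.trans h.2.symm (hxa.mono hE))
    obtain rfl : j = s := by
      by_contra hjs
      exact ha (expand_mono (by omega : j + 1 ≤ s) (mem_expand_succ h.1))
    exact h
  · exfalso
    obtain hcB' | ⟨j, hj, u, hu⟩ := mem_expand_iff.mp hc
    · exact hcB (Or.inl hcB')
    have hE : expand B F j ⊆ expand B F s := expand_mono hj.le
    refine hcB (Or.inr ⟨(u, c), ⟨j, hC.lt_of_mem hu, hu, ?_⟩, rfl⟩)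
    exact Relation.ReflTransGen.tail (hxa.mono hE)
      ⟨hca.symm, trivial, trivial, fun ha' => ha (hE ha'), hC.target_not_mem_expand hu⟩

theorem target_mem_tradeBlue (h : IsBundleForce G B F x s u w) :
    w ∈ tradeBlue G B F x K (s + 1) := by
  refine ⟨Or.inr ⟨(u, w), ⟨s, hC.lt_of_mem h.1, h⟩, rfl⟩, ?_⟩
  rintro ⟨⟨_, w'⟩, ⟨j, hj, h'⟩, rfl⟩
  exact hC.target_not_mem_expand h.1 (expand_mono (by omega) (hC.forcer_mem_expand h'.1))

theorem whiteConn_of_whiteConn_tradeBlue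
    (h : whiteConn G Set.univ (tradeBlue G B F x K (s + 1)) a y)
    (ha : a ∉ expand B F s) (hxa : whiteConn G Set.univ (expand B F s) x a) :
    y ∉ expand B F s ∧ whiteConn G Set.univ (expand B F s) x y := by
  induction h with
  | refl => exact ⟨ha, hxa⟩
  | tail _ hcd ih =>
    obtain ⟨hadj, -, -, hcN, hdN⟩ := hcd
    obtain ⟨hc, hxc⟩ := ih
    have hd : _ ∉ expand B F s := fun hd =>
      hcN (hC.target_mem_tradeBlue (hC.isBundleForce_of_adj hd hdN hc hxc hadj.symm))
    exact ⟨hd, Relation.ReflTransGen.tail hxc ⟨hadj, trivial, trivial, hc, hd⟩⟩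

theorem psdValid_reverse (h : IsBundleForce G B F x s u w) :
    PSDValid G Set.univ (tradeBlue G B F x K (s + 1)) w u := by
  refine ⟨trivial, trivial, hC.target_mem_tradeBlue h,
    fun hu => hu.2 ⟨(u, w), ⟨s, s.lt_succ_self, h⟩, rfl⟩, (hC.adj h.1).symm, ?_⟩
  intro y _ hwy hyN huy
  have hw := hC.target_not_mem_expand h.1
  by_cases hy : y ∈ expand B F s
  · exact (hC.forced_once (hC.isBundleForce_of_adj hy hyN hw h.2 hwy.symm).1 h.1).2
  · have hxy := Relation.ReflTransGen.tail h.2 ⟨hwy, trivial, trivial, hw, hy⟩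
    exact absurd (hC.forcer_mem_expand h.1) (hC.whiteConn_of_whiteConn_tradeBlue huy.symm hy hxy).1

theorem expand_tradeChron_of_le {m : ℕ} (hm : m ≤ K) :
    expand (rerootRoots B (bundleForces G B F x K)) (tradeChron G B F x K) m =
      tradeBlue G B F x K (K - m) := by
  induction m with
  | zero => rfl
  | succ m ih =>
    obtain ⟨s, hs⟩ : ∃ s, K - m = s + 1 := ⟨K - m - 1, by omega⟩
    rw [expand, ih (by omega), hs, tradeChron_of_le hm, show K - (m + 1) = s by omega]
    ext y
    constructor
    · rintro (⟨hy, hyN⟩ | ⟨w, h⟩)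
      · exact ⟨hy, fun ⟨p, ⟨j, hj, h⟩, hp⟩ => hyN ⟨p, ⟨j, by omega, h⟩, hp⟩⟩
      · refine ⟨hC.isPathBundle.source_mem ⟨(y, w), ⟨s, hC.lt_of_mem h.1, h⟩, rfl⟩, ?_⟩
        rintro ⟨⟨_, w'⟩, ⟨j, hj, h'⟩, rfl⟩
        exact absurd (hC.bundleForce_out_unique h' h).1 (by omega)
    · rintro ⟨hy, hyN⟩
      by_cases hys : ∃ w, IsBundleForce G B F x s y w
      · obtain ⟨w, h⟩ := hys
        exact Or.inr ⟨w, h⟩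
      · refine Or.inl ⟨hy, ?_⟩
        rintro ⟨⟨_, w⟩, ⟨j, hj, h⟩, rfl⟩
        rcases Nat.lt_succ_iff_lt_or_eq.mp hj with hjs | rfl
        · exact hyN ⟨_, ⟨j, hjs, h⟩, rfl⟩
        · exact hys ⟨w, h⟩

theorem expand_tradeChron_add (j : ℕ) :
    expand (rerootRoots B (bundleForces G B F x K)) (tradeChron G B F x K) (K + j) =
      Prod.snd '' bundleForces G B F x K ∪ expand B F j := by
  induction j with
  | zero =>
    rw [Nat.add_zero, hC.expand_tradeChron_of_le le_rfl, Nat.sub_self, tradeBlue, expand,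
      Set.union_comm]
    convert Set.sdiff_empty
    exact Set.image_eq_empty.mpr (Set.eq_empty_of_forall_notMem fun _ ⟨_, hk, _⟩ => by omega)
  | succ j ih =>
    rw [← add_assoc, expand, ih, tradeChron_add_succ, expand]
    ext y
    simp only [Set.mem_union, Set.mem_ofPred_eq]
    constructor
    · rintro ((hy | hy) | ⟨u, hu, -⟩)
      · exact Or.inl hy
      · exact Or.inr (Or.inl hy)
      · exact Or.inr (Or.inr ⟨u, hu⟩)
    · rintro (hy | hy | ⟨u, hu⟩)
      · exact Or.inl (Or.inl hy)
      · exact Or.inl (Or.inr hy)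
      · by_cases h : IsBundleForce G B F x j u y
        · exact Or.inl (Or.inl ⟨(u, y), ⟨j, hC.lt_of_mem hu, h⟩, rfl⟩)
        · exact Or.inr ⟨u, hu, h⟩

theorem relaxedChron_tradeChron :
    RelaxedChron (PSDValid G Set.univ) Set.univ (rerootRoots B (bundleForces G B F x K)) (2 * K)
      (tradeChron G B F x K) where
  subset := Set.subset_univ _
  init := by
    rw [tradeChron_of_le (Nat.zero_le K), Nat.sub_zero]
    exact Set.eq_empty_of_forall_notMem fun _ h => (hC.lt_of_mem h.1).false
  bound m hm := by
    obtain ⟨j, rfl⟩ : ∃ j, m = K + j + 1 := ⟨m - K - 1, by omega⟩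
    rw [tradeChron_add_succ, hC.bound (j + 1) (by omega)]
    exact Set.sep_empty _
  forcesValid k hk u w h := by
    by_cases hkK : k + 1 ≤ K
    · obtain ⟨s, hs⟩ : ∃ s, K - k = s + 1 := ⟨K - k - 1, by omega⟩
      rw [tradeChron_of_le hkK, show K - (k + 1) = s by omega] at h
      rw [hC.expand_tradeChron_of_le (by omega), hs]
      exact hC.psdValid_reverse h
    · obtain ⟨j, rfl⟩ : ∃ j, k = K + j := ⟨k - K, by omega⟩
      rw [tradeChron_add_succ] at h
      obtain ⟨h, hN⟩ := h
      rw [hC.expand_tradeChron_add]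
      refine (hC.valid_of_mem h).mono Set.subset_union_right ?_
      rintro (⟨⟨u', _⟩, ⟨i, -, h'⟩, rfl⟩ | hw)
      · obtain ⟨rfl, rfl⟩ := hC.forced_once h'.1 h
        exact hN h'
      · exact hC.target_not_mem_expand h hw
  uniqueForcer k u₁ u₂ w h₁ h₂ := by
    by_cases hk : k ≤ K
    · rw [tradeChron_of_le hk] at h₁ h₂
      exact (hC.bundleForce_out_unique h₁ h₂).2
    · obtain ⟨j, rfl⟩ : ∃ j, k = K + j + 1 := ⟨k - K - 1, by omega⟩
      rw [tradeChron_add_succ] at h₁ h₂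
      exact hC.uniqueForcer _ _ _ _ h₁.1 h₂.1
  complete := by
    rw [two_mul, hC.expand_tradeChron_add]
    exact hC.complete.trans Set.subset_union_right

theorem forcesOf_tradeChron :
    forcesOf (tradeChron G B F x K) (2 * K) = reroot (forcesOf F K) (bundleForces G B F x K) := by
  ext ⟨a, c⟩
  constructor
  · rintro ⟨m, hm, hm2, h⟩
    by_cases hmK : m ≤ K
    · rw [tradeChron_of_le hmK] at h
      exact Or.inl ⟨K - m, by omega, h⟩
    · obtain ⟨j, rfl⟩ : ∃ j, m = K + j + 1 := ⟨m - K - 1, by omega⟩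
      rw [tradeChron_add_succ] at h
      refine Or.inr ⟨mem_forcesOf_iff.mpr ⟨j, by omega, h.1⟩, ?_⟩
      rintro ⟨i, -, h'⟩
      obtain rfl := (hC.forced_once h'.1 h.1).1
      exact h.2 h'
  · rintro (⟨j, hj, h⟩ | ⟨hS, hN⟩)
    · refine ⟨K - j, by omega, by omega, ?_⟩
      rw [tradeChron_of_le (Nat.sub_le K j), Nat.sub_sub_self hj.le]
      exact h
    · obtain ⟨j, hj, h⟩ := mem_forcesOf_iff.mp hS
      refine ⟨K + j + 1, by omega, by omega, ?_⟩
      rw [tradeChron_add_succ]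
      exact ⟨h, fun h' => hN ⟨j, hj, h'⟩⟩

end RelaxedChron

end Bundle

end ZF

theorem trade_vertex_in_trees_general {V : Type*} [Fintype V]
    (G : SimpleGraph V) (B₀ : Set V) (K₀ : ℕ) (F₀ : ℕ → Set (V × V)) (k : ℕ)
    (hcard : B₀.ncard = k)
    (hF₀ : ZF.RelaxedChron (ZF.PSDValid G Set.univ) Set.univ B₀ K₀ F₀)
    (v : V) :
    ∃ (B : Set V) (K : ℕ) (F : ℕ → Set (V × V)),
      B.ncard = k ∧ v ∈ B ∧
      ZF.IsForcingSet (ZF.PSDValid G Set.univ) Set.univ B ∧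
      ZF.RelaxedChron (ZF.PSDValid G Set.univ) Set.univ B K F ∧
      (fun b => ZF.treeOf (ZF.forcesOf F K) b) '' B
        = (fun b => ZF.treeOf (ZF.forcesOf F₀ K₀) b) '' B₀ := by
  have hF := hF₀.isGradedForest
  have hP := hF₀.isPathBundle (x := v)
  have hC := hF₀.relaxedChron_tradeChron (x := v)
  refine ⟨_, _, _, (hF.ncard_rerootRoots hP).trans hcard, hF₀.mem_rerootRoots_bundleForces,
    hC.isForcingSet fun _ _ _ _ h hBB' hw => h.mono hBB' hw, hC, ?_⟩
  rw [hF₀.forcesOf_tradeChron]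
  exact hF.image_treeOf_reroot hP

/-- Given the PSD forcing trees `T` induced by some relaxed chronology of PSD forces for
a PSD forcing set of size `k`, for every vertex `v` there is a PSD forcing set `B` of size
`k` containing `v` and a relaxed chronology of PSD forces for `B` whose forcing trees are
exactly `T`. -/
theorem trade_vertex_in_trees {V : Type*} [Fintype V] [DecidableEq V]
    (G : SimpleGraph V) (B₀ : Set V) (K₀ : ℕ) (F₀ : ℕ → Set (V × V)) (k : ℕ)
    (hcard : B₀.ncard = k)
    (hB₀ : ZF.IsForcingSet (ZF.PSDValid G Set.univ) Set.univ B₀)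
    (hF₀ : ZF.RelaxedChron (ZF.PSDValid G Set.univ) Set.univ B₀ K₀ F₀)
    (v : V) :
    ∃ (B : Set V) (K : ℕ) (F : ℕ → Set (V × V)),
      B.ncard = k ∧ v ∈ B ∧
      ZF.IsForcingSet (ZF.PSDValid G Set.univ) Set.univ B ∧
      ZF.RelaxedChron (ZF.PSDValid G Set.univ) Set.univ B K F ∧
      (fun b => ZF.treeOf (ZF.forcesOf F K) b) '' B
        = (fun b => ZF.treeOf (ZF.forcesOf F₀ K₀) b) '' B₀ :=
  trade_vertex_in_trees_general G B₀ K₀ F₀ k hcard hF₀ v
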